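/- arXiv:1608.03666 — 2 statements merged into one kernel-verified Lean document; each statement's English description precedes it below -/
import Mathlib

section
/- Let ξ be an ordinal, A : X → Y a bounded linear operator between Banach spaces, and 1 < p < ∞. Then A is ξ-asymptotically uniformly smooth with power type p if and only if t_{ξ,p}(A) < ∞. Moreover, in this case each of the quantities t_{ξ,p}(A) and sup_{σ∈(0,1)} ρ_ξ(σ; A)/σ^p can be majorized by a quantity depending only on the other, p, and ‖A‖. -/
/-!
Common definitions formalizing the notions of Causey, "Power type ξ-asymptotically
uniformly smooth norms": Szlenk derivations and indices, B-trees, weakly null and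
weak*-null collections, the moduli ρ_ξ and δ_ξ^{w*}, the trees Γ_ξ, Γ_{ξ,n}, Γ_{ξ,∞}
with their levels and probability weights, and related quantities.
-/

noncomputable section

open Ordinal Set Metric Filter NormedSpace Pointwise
open scoped Classical ENNReal Topology

universe u v

namespace SzlenkPaper

/-! ### B-trees of finite sequences

Finite sequences in `Λ` are modelled by `List Λ`; `s <+: t` (list prefix) is the
initial segment order `s ⪯ t`, and the proper initial segment order `s ≺ t` is
`s <+: t ∧ s ≠ t`. -/

/-- `B` is a B-tree : a set of nonempty finite sequences which, after adding the
empty sequence, is downward closed under initial segments. -/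
def IsBTree {Λ : Type v} (B : Set (List Λ)) : Prop :=
  [] ∉ B ∧ ∀ t ∈ B, ∀ s : List Λ, s ≠ [] → s <+: t → s ∈ B

/-- The `≺`-maximal members of a set of finite sequences. -/
def maxMembers {Λ : Type v} (B : Set (List Λ)) : Set (List Λ) :=
  {t | t ∈ B ∧ ¬∃ s ∈ B, t <+: s ∧ t ≠ s}

/-- `B' = B \ MAX(B)`, the derived tree. -/
def treeDeriv {Λ : Type v} (B : Set (List Λ)) : Set (List Λ) :=
  {t | t ∈ B ∧ ∃ s ∈ B, t <+: s ∧ t ≠ s}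

/-- Transfinite iterates `B^ζ` of the tree derivation: `B^0 = B`,
`B^{ζ+1} = (B^ζ)'`, with intersections at limit ordinals. -/
def treeIter {Λ : Type v} (B : Set (List Λ)) (o : Ordinal.{0}) : Set (List Λ) :=
  Ordinal.limitRecOn (motive := fun _ => Set (List Λ)) o B (fun _ S => treeDeriv S)
    (fun o' _ f => ⋂ ζ : Set.Iio o', f ζ.1 (Set.mem_Iio.mp ζ.2))

/-- `o(B) = o` : the least ordinal at which the iterated derivation of `B` is empty is `o`. -/
def hasOrder {Λ : Type v} (B : Set (List Λ)) (o : Ordinal.{0}) : Prop :=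
  treeIter B o = ∅ ∧ ∀ ζ : Ordinal.{0}, ζ < o → treeIter B ζ ≠ ∅

/-- The (finite) set of initial segments `s ⪯ t` of `t` which belong to `B`. -/
def branchFinset {Λ : Type v} (B : Set (List Λ)) (t : List Λ) : Finset (List Λ) :=
  t.inits.toFinset.filter fun s => s ∈ B

section WeakTopology

variable {X : Type u} [NormedAddCommGroup X] [NormedSpace ℝ X]

/-- The closure of a set in the weak topology of `X`. -/
def weakClosure (S : Set X) : Set X :=
  ⇑(toWeakSpace ℝ X) ⁻¹' closure (⇑(toWeakSpace ℝ X) '' S)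

/-- The filter of weak neighborhoods of a point of `X`. -/
def weakNhds (x : X) : Filter X :=
  Filter.comap (⇑(toWeakSpace ℝ X)) (𝓝 (toWeakSpace ℝ X x))

/-- The closure of a set of functionals in the weak* topology of `X*`. -/
def wstarClosure (S : Set (StrongDual ℝ X)) : Set (StrongDual ℝ X) :=
  ⇑(StrongDual.toWeakDual (𝕜 := ℝ) (E := X)) ⁻¹'
    closure (⇑(StrongDual.toWeakDual (𝕜 := ℝ) (E := X)) '' S)

/-- The filter of weak* neighborhoods of a functional in `X*`. -/
def wstarNhds (f : StrongDual ℝ X) : Filter (StrongDual ℝ X) :=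
  Filter.comap (⇑(StrongDual.toWeakDual (𝕜 := ℝ) (E := X))) (𝓝 (StrongDual.toWeakDual f))

/-- A set of functionals is weak*-compact if it is compact in the weak* topology. -/
def IsWStarCompact (K : Set (StrongDual ℝ X)) : Prop :=
  IsCompact (⇑(StrongDual.toWeakDual (𝕜 := ℝ) (E := X)) '' K)

/-! ### Szlenk derivations -/

/-- The Szlenk derivation `s_ε(K)`: the points of `K` all of whose weak*
neighborhoods `V` satisfy `diam (V ∩ K) > ε`; by convention `s_ε(K) = K` for `ε ≤ 0`. -/
def szDeriv (ε : ℝ) (K : Set (StrongDual ℝ X)) : Set (StrongDual ℝ X) :=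
  if ε ≤ 0 then K else {f | f ∈ K ∧ ∀ V ∈ wstarNhds f, ε < diam (V ∩ K)}

/-- Transfinite iterates `s_ε^o(K)` of the Szlenk derivation. -/
def szIter (ε : ℝ) (K : Set (StrongDual ℝ X)) (o : Ordinal.{0}) : Set (StrongDual ℝ X) :=
  Ordinal.limitRecOn (motive := fun _ => Set (StrongDual ℝ X)) o K (fun _ S => szDeriv ε S)
    (fun o' _ f => ⋂ ζ : Set.Iio o', f ζ.1 (Set.mem_Iio.mp ζ.2))

/-- `Sz(K) ≤ o`, i.e. for every `ε > 0` the iterated derivation is empty by stage `o`. -/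
def SzLe (K : Set (StrongDual ℝ X)) (o : Ordinal.{0}) : Prop :=
  ∀ ε : ℝ, 0 < ε → szIter ε K o = ∅

/-- `Sz(K) = o`. -/
def SzEq (K : Set (StrongDual ℝ X)) (o : Ordinal.{0}) : Prop :=
  SzLe K o ∧ ∀ ζ : Ordinal.{0}, ζ < o → ∃ ε : ℝ, 0 < ε ∧ szIter ε K ζ ≠ ∅

/-- `s_{ξ,ε}(K) = s_ε^{ω^ξ}(K)`. -/
def szIterXi (ξ : Ordinal.{0}) (ε : ℝ) (K : Set (StrongDual ℝ X)) : Set (StrongDual ℝ X) :=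
  szIter ε K (omega0 ^ ξ)

/-- Iterated application `s_{ξ,ε_1} s_{ξ,ε_2} ⋯ s_{ξ,ε_n}(K)` for a list `[ε_1,…,ε_n]`. -/
def multiDeriv (ξ : Ordinal.{0}) : List ℝ → Set (StrongDual ℝ X) → Set (StrongDual ℝ X)
  | [], K => K
  | e :: l, K => szIterXi ξ e (multiDeriv ξ l K)

/-- `Sz_ξ(K,ε)`: the least `n ∈ ℕ` such that `s_ε^{ω^ξ·n}(K) = ∅` (meaningful when
`Sz(K) ≤ ω^{ξ+1}`, in which case the least such ordinal is a natural number). -/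
def szNat (ξ : Ordinal.{0}) (ε : ℝ) (K : Set (StrongDual ℝ X)) : ℕ :=
  sInf {n : ℕ | szIter ε K (omega0 ^ ξ * n) = ∅}

/-- The ξ-Szlenk power type `p_ξ(K) = limsup_{ε→0⁺} log Sz_ξ(K,ε) / |log ε|`, with
value `∞` when `Sz(K) > ω^{ξ+1}`. -/
def szPower (ξ : Ordinal.{0}) (K : Set (StrongDual ℝ X)) : ℝ≥0∞ :=
  if SzLe K (omega0 ^ (ξ + 1)) then
    Filter.limsup (fun ε : ℝ =>
      ENNReal.ofReal (Real.log (szNat ξ ε K : ℝ) / |Real.log ε|)) (𝓝[>] (0 : ℝ))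
  else ⊤

variable {Y : Type u} [NormedAddCommGroup Y] [NormedSpace ℝ Y]

/-- `A* B_{Y*}`: the image of the closed unit ball of `Y*` under the adjoint of `A`. -/
def adjBall (A : X →L[ℝ] Y) : Set (StrongDual ℝ X) :=
  (fun g : StrongDual ℝ Y => g.comp A) '' Metric.closedBall 0 1

/-- The ξ-Szlenk power type of an operator, `p_ξ(A) = p_ξ(A*B_{Y*})`. -/
def szPowerOp (ξ : Ordinal.{0}) (A : X →L[ℝ] Y) : ℝ≥0∞ :=
  szPower ξ (adjBall A)

/-- The ξ-Szlenk power type of a Banach space, `p_ξ(X) = p_ξ(B_{X*})`. -/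
def szPowerSp (ξ : Ordinal.{0}) (X : Type u) [NormedAddCommGroup X] [NormedSpace ℝ X] : ℝ≥0∞ :=
  szPower ξ (Metric.closedBall (0 : StrongDual ℝ X) 1)

end WeakTopology

section Collections

variable {X Y : Type u} [NormedAddCommGroup X] [NormedSpace ℝ X]
  [NormedAddCommGroup Y] [NormedSpace ℝ Y]

/-- A weakly null collection `(x_t)_{t ∈ B}` : for every ordinal `ζ` and every
`t ∈ (B ∪ {∅})^{ζ+1}`, `0` belongs to the weak closure of `{x_s : s ∈ B^ζ, s⁻ = t}`. -/
def WeaklyNullColl {Λ : Type v} (B : Set (List Λ)) (g : List Λ → X) : Prop :=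
  ∀ ζ : Ordinal.{0}, ∀ t ∈ treeIter (insert [] B) (ζ + 1),
    (0 : X) ∈ weakClosure {x : X | ∃ s ∈ treeIter B ζ, s ≠ [] ∧ s.dropLast = t ∧ x = g s}

/-- A weak*-null collection `(z*_t)_{t ∈ B}` in `Y*`. -/
def WStarNullColl {Λ : Type v} (B : Set (List Λ)) (z : List Λ → StrongDual ℝ Y) : Prop :=
  ∀ ζ : Ordinal.{0}, ∀ t ∈ treeIter (insert [] B) (ζ + 1),
    (0 : StrongDual ℝ Y) ∈ wstarClosure {w : StrongDual ℝ Y | ∃ s ∈ treeIter B ζ, s ≠ [] ∧ s.dropLast = t ∧ w = z s}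

/-- `co(x_s : s ⪯ t, s ∈ B)`, the convex hull of the values along the branch through `t`. -/
def branchHull {Λ : Type v} (B : Set (List Λ)) (g : List Λ → X) (t : List Λ) : Set X :=
  convexHull ℝ {x : X | ∃ s ∈ B, s <+: t ∧ x = g s}

/-! ### Norms and moduli -/

/-- `N` is a norm on `Y`. -/
def IsNormOn (N : Y → ℝ) : Prop :=
  N 0 = 0 ∧ (∀ y : Y, y ≠ 0 → 0 < N y) ∧ (∀ (c : ℝ) (y : Y), N (c • y) = |c| * N y) ∧
    ∀ y z : Y, N (y + z) ≤ N y + N z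

/-- `N` is a norm on `Y` equivalent to the given norm. -/
def IsEquivNorm (N : Y → ℝ) : Prop :=
  IsNormOn N ∧ ∃ c C : ℝ, 0 < c ∧ 0 < C ∧ ∀ y : Y, c * ‖y‖ ≤ N y ∧ N y ≤ C * ‖y‖

/-- `N` is a `2`-equivalent norm on `Y`: `‖y‖/2 ≤ N y ≤ 2‖y‖`. -/
def IsTwoEquivNorm (N : Y → ℝ) : Prop :=
  IsNormOn N ∧ ∀ y : Y, (1 / 2) * ‖y‖ ≤ N y ∧ N y ≤ 2 * ‖y‖

/-- The dual norm on `Y*` of a norm `N` on `Y`. -/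
def dualNormOf (N : Y → ℝ) (g : StrongDual ℝ Y) : ℝ :=
  sSup {r : ℝ | ∃ y : Y, N y ≤ 1 ∧ r = |g y|}

/-- The modulus `ρ_ξ(σ; A : X → (Y,N))` of ξ-asymptotic uniform smoothness of the
operator `A`, where `Y` carries the (equivalent) norm `N`:
`sup inf {N(y + Ax) − 1 : t ∈ B, x ∈ co(x_s : s ⪯ t)}`, the supremum taken over
all `y` in the `N`-unit ball of `Y`, all B-trees `B` with `o(B) = ω^ξ`, and all
weakly null collections `(x_t)_{t ∈ B} ⊆ σ B_X`. -/
def rhoWith (ξ : Ordinal.{0}) (A : X →L[ℝ] Y) (N : Y → ℝ) (σ : ℝ) : ℝ :=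
  sSup {r : ℝ | ∃ y : Y, N y ≤ 1 ∧
    ∃ (Λ : Type (max u 1)) (B : Set (List Λ)) (g : List Λ → X),
      IsBTree B ∧ hasOrder B (omega0 ^ ξ) ∧ WeaklyNullColl B g ∧ (∀ t ∈ B, ‖g t‖ ≤ σ) ∧
      r = sInf {c : ℝ | ∃ t ∈ B, ∃ x ∈ branchHull B g t, c = N (y + A x) - 1}}

/-- `ρ_ξ(σ; A)` with the given norm of `Y`. -/
def rho (ξ : Ordinal.{0}) (A : X →L[ℝ] Y) (σ : ℝ) : ℝ :=
  rhoWith ξ A (fun y => ‖y‖) σ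

/-- `A : X → (Y,N)` is ξ-asymptotically uniformly smooth with power type `p`:
`ρ_ξ(σ;A) ≤ C σ^p` for all `0 < σ ≤ 1`. -/
def AUSWith (ξ : Ordinal.{0}) (A : X →L[ℝ] Y) (N : Y → ℝ) (p : ℝ) : Prop :=
  ∃ C : ℝ, ∀ σ : ℝ, 0 < σ → σ ≤ 1 → rhoWith ξ A N σ ≤ C * σ ^ p

/-- `A : X → (Y,N)` is ξ-asymptotically uniformly smooth with power type `∞`. -/
def AUSInfWith (ξ : Ordinal.{0}) (A : X →L[ℝ] Y) (N : Y → ℝ) : Prop :=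
  ∃ C : ℝ, ∀ (y : Y) (b : ℝ), 0 < b →
    ∀ (Λ : Type (max u 1)) (B : Set (List Λ)) (g : List Λ → X),
      IsBTree B → hasOrder B (omega0 ^ ξ) → WeaklyNullColl B g → (∀ t ∈ B, ‖g t‖ ≤ b) →
      sInf {c : ℝ | ∃ t ∈ B, ∃ x ∈ branchHull B g t, c = N (y + A x)} ≤ max (N y) (C * b)

/-- The set of constants `C > 0` witnessing the quantity `t_{ξ,p}(A)`: for every
`y ∈ Y`, `σ > 0`, every B-tree `B` with `o(B) = ω^ξ` and every weakly null
`(x_t)_{t∈B} ⊆ σ B_X`, `inf {‖y + Ax‖^p} ≤ ‖y‖^p + C σ^p`.  `t_{ξ,p}(A)` itself is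
the infimum of this set. -/
def tConstSet (ξ : Ordinal.{0}) (A : X →L[ℝ] Y) (p : ℝ) : Set ℝ :=
  {C : ℝ | 0 < C ∧ ∀ (y : Y) (σ : ℝ), 0 < σ →
    ∀ (Λ : Type (max u 1)) (B : Set (List Λ)) (g : List Λ → X),
      IsBTree B → hasOrder B (omega0 ^ ξ) → WeaklyNullColl B g → (∀ t ∈ B, ‖g t‖ ≤ σ) →
      sInf {c : ℝ | ∃ t ∈ B, ∃ x ∈ branchHull B g t, c = ‖y + A x‖ ^ p} ≤ ‖y‖ ^ p + C * σ ^ p}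

/-- The set of constants `C > 0` witnessing `t_{ξ,∞}(A)`:
`inf {‖y + Ax‖} ≤ max {‖y‖, C σ}` under the same quantification. -/
def tInfConstSet (ξ : Ordinal.{0}) (A : X →L[ℝ] Y) : Set ℝ :=
  {C : ℝ | 0 < C ∧ ∀ (y : Y) (σ : ℝ), 0 < σ →
    ∀ (Λ : Type (max u 1)) (B : Set (List Λ)) (g : List Λ → X),
      IsBTree B → hasOrder B (omega0 ^ ξ) → WeaklyNullColl B g → (∀ t ∈ B, ‖g t‖ ≤ σ) →
      sInf {c : ℝ | ∃ t ∈ B, ∃ x ∈ branchHull B g t, c = ‖y + A x‖} ≤ max ‖y‖ (C * σ)}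

/-- Modulus `δ^{w*}_ξ(τ; A* : (Y,N)* → X*)` of weak*-ξ-asymptotic uniform convexity
of the adjoint `A*`, with `Y` renormed by `N`: the infimum over `y*` of `N`-dual-norm `1`,
B-trees `B` with `o(B) = ω^ξ`, and weak*-null `(A*,τ)`-large collections `(z*_s)_{s∈B}`
of `sup {N*(y* + Σ_{s ⪯ t} z*_s) − 1 : t ∈ B}`. -/
def deltaWith (ξ : Ordinal.{0}) (A : X →L[ℝ] Y) (N : Y → ℝ) (τ : ℝ) : ℝ :=
  sInf {r : ℝ | ∃ g : StrongDual ℝ Y, dualNormOf N g = 1 ∧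
    ∃ (Λ : Type (max u 1)) (B : Set (List Λ)) (z : List Λ → StrongDual ℝ Y),
      IsBTree B ∧ hasOrder B (omega0 ^ ξ) ∧ WStarNullColl B z ∧
      (∀ s ∈ B, τ < ‖(z s).comp A‖) ∧
      r = sSup {c : ℝ | ∃ t ∈ B, c = dualNormOf N (g + ∑ s ∈ branchFinset B t, z s) - 1}}

/-- `δ^{w*}_ξ(τ; A*)` with the original norm of `Y`. -/
def deltaOp (ξ : Ordinal.{0}) (A : X →L[ℝ] Y) (τ : ℝ) : ℝ :=
  sInf {r : ℝ | ∃ g : StrongDual ℝ Y, ‖g‖ = 1 ∧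
    ∃ (Λ : Type (max u 1)) (B : Set (List Λ)) (z : List Λ → StrongDual ℝ Y),
      IsBTree B ∧ hasOrder B (omega0 ^ ξ) ∧ WStarNullColl B z ∧
      (∀ s ∈ B, τ < ‖(z s).comp A‖) ∧
      r = sSup {c : ℝ | ∃ t ∈ B, c = ‖g + ∑ s ∈ branchFinset B t, z s‖ - 1}}

/-- `A* : (Y,N)* → X*` is weak*-ξ-asymptotically uniformly convex with power type `p`:
`δ^{w*}_ξ(τ;A*) ≥ c τ^p` for all `0 < τ ≤ 1`. -/
def AUCWith (ξ : Ordinal.{0}) (A : X →L[ℝ] Y) (N : Y → ℝ) (p : ℝ) : Prop :=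
  ∃ c : ℝ, 0 < c ∧ ∀ τ : ℝ, 0 < τ → τ ≤ 1 → c * τ ^ p ≤ deltaWith ξ A N τ

/-! ### Space (identity operator) versions, for a renorming `N` of `X` itself. -/

/-- The modulus `ρ_ξ(σ)` of the norm `N` on `X`. -/
def rhoSpace (ξ : Ordinal.{0}) (N : X → ℝ) (σ : ℝ) : ℝ :=
  sSup {r : ℝ | ∃ y : X, N y ≤ 1 ∧
    ∃ (Λ : Type (max u 1)) (B : Set (List Λ)) (g : List Λ → X),
      IsBTree B ∧ hasOrder B (omega0 ^ ξ) ∧ WeaklyNullColl B g ∧ (∀ t ∈ B, N (g t) ≤ σ) ∧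
      r = sInf {c : ℝ | ∃ t ∈ B, ∃ x ∈ branchHull B g t, c = N (y + x) - 1}}

/-- The norm `N` on `X` is ξ-asymptotically uniformly smooth with power type `p`. -/
def AUSSpace (ξ : Ordinal.{0}) (N : X → ℝ) (p : ℝ) : Prop :=
  ∃ C : ℝ, ∀ σ : ℝ, 0 < σ → σ ≤ 1 → rhoSpace ξ N σ ≤ C * σ ^ p

/-- The modulus `δ^{w*}_ξ(τ)` of the dual norm of `N` on `X*`. -/
def deltaSpace (ξ : Ordinal.{0}) (N : X → ℝ) (τ : ℝ) : ℝ :=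
  sInf {r : ℝ | ∃ g : StrongDual ℝ X, dualNormOf N g = 1 ∧
    ∃ (Λ : Type (max u 1)) (B : Set (List Λ)) (z : List Λ → StrongDual ℝ X),
      IsBTree B ∧ hasOrder B (omega0 ^ ξ) ∧ WStarNullColl B z ∧
      (∀ s ∈ B, τ < dualNormOf N (z s)) ∧
      r = sSup {c : ℝ | ∃ t ∈ B, c = dualNormOf N (g + ∑ s ∈ branchFinset B t, z s) - 1}}

/-- The dual norm of `N` on `X*` is weak*-ξ-asymptotically uniformly convex with
power type `p`. -/
def AUCSpace (ξ : Ordinal.{0}) (N : X → ℝ) (p : ℝ) : Prop :=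
  ∃ c : ℝ, 0 < c ∧ ∀ τ : ℝ, 0 < τ → τ ≤ 1 → c * τ ^ p ≤ deltaSpace ξ N τ

end Collections

/-! ### The trees `Γ_ξ`, `Γ_{ξ,n}`, `Γ_{ξ,∞}`, their levels, and the weights `ℙ_ξ`. -/

/-- `ζ + S`: shift every entry of every sequence in `S` by `ζ`. -/
def shiftSet (ζ : Ordinal.{0}) (S : Set (List Ordinal.{0})) : Set (List Ordinal.{0}) :=
  (fun t => t.map fun a => ζ + a) '' S

/-- `gammaStep ξ G n = Γ_{ξ,n+1}` built from `G = Γ_ξ`: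
`Γ_{ξ,1} = Γ_ξ` and `Γ_{ξ,n+1} = (ω^ξ·n + Γ_ξ) ∪ {t ⌢ u : t ∈ MAX(ω^ξ·n + Γ_ξ), u ∈ Γ_{ξ,n}}`. -/
def gammaStep (ξ : Ordinal.{0}) (G : Set (List Ordinal.{0})) : ℕ → Set (List Ordinal.{0})
  | 0 => G
  | n + 1 =>
    shiftSet (omega0 ^ ξ * ((n : Ordinal.{0}) + 1)) G ∪
      {w | ∃ t ∈ maxMembers (shiftSet (omega0 ^ ξ * ((n : Ordinal.{0}) + 1)) G),
        ∃ u ∈ gammaStep ξ G n, w = t ++ u}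

/-- The B-trees `Γ_ξ`: `Γ_0 = {(0)}`, `Γ_{ξ+1} = ⋃_n Γ_{ξ,n}`, and at limit `ξ`,
`Γ_ξ = ⋃_{ζ<ξ} (ω^ζ + Γ_{ζ+1})`. -/
def Gamma (ξ : Ordinal.{0}) : Set (List Ordinal.{0}) :=
  Ordinal.limitRecOn (motive := fun _ => Set (List Ordinal.{0})) ξ
    {[(0 : Ordinal.{0})]}
    (fun ζ G => ⋃ n : ℕ, gammaStep ζ G n)
    (fun _ hξ f => ⋃ η : Set.Iio _,
      shiftSet (omega0 ^ (η.1 : Ordinal.{0}))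
        (f (Order.succ η.1) (hξ.succ_lt (Set.mem_Iio.mp η.2))))

/-- `Γ_{ξ,n}` for `n ≥ 1` (junk value `Γ_ξ` for `n = 0`). -/
def GammaN (ξ : Ordinal.{0}) (n : ℕ) : Set (List Ordinal.{0}) :=
  gammaStep ξ (Gamma ξ) (n - 1)

/-- The level `Λ_{ξ,n,m}` of `Γ_{ξ,n}`: sequences of the form
`(ω^ξ(n−1)+t_1) ⌢ … ⌢ (ω^ξ(n−m)+t_m)` with `t_i ∈ Γ_ξ` nonempty and
`t_1, …, t_{m−1}` maximal in `Γ_ξ`. -/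
def levelN (ξ : Ordinal.{0}) (n m : ℕ) : Set (List Ordinal.{0}) :=
  {w | ∃ ts : Fin m → List Ordinal.{0},
    (∀ i, ts i ∈ Gamma ξ ∧ ts i ≠ []) ∧
    (∀ i : Fin m, (i : ℕ) + 1 < m → ts i ∈ maxMembers (Gamma ξ)) ∧
    w = (List.ofFn fun i : Fin m =>
      (ts i).map fun a => omega0 ^ ξ * ((n - 1 - (i : ℕ) : ℕ) : Ordinal.{0}) + a).flatten}

/-- The level `Λ_{ξ,∞,m}` of `Γ_{ξ,∞}`: sequences
`t_1 ⌢ (ω^ξ + t_2) ⌢ … ⌢ (ω^ξ(m−1) + t_m)` with `t_i ∈ Γ_ξ` nonempty and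
`t_1, …, t_{m−1}` maximal in `Γ_ξ`. -/
def levelInf (ξ : Ordinal.{0}) (m : ℕ) : Set (List Ordinal.{0}) :=
  {w | ∃ ts : Fin m → List Ordinal.{0},
    (∀ i, ts i ∈ Gamma ξ ∧ ts i ≠ []) ∧
    (∀ i : Fin m, (i : ℕ) + 1 < m → ts i ∈ maxMembers (Gamma ξ)) ∧
    w = (List.ofFn fun i : Fin m =>
      (ts i).map fun a => omega0 ^ ξ * ((i : ℕ) : Ordinal.{0}) + a).flatten}

/-- `Γ_{ξ,∞} = ⋃_{m ≥ 1} Λ_{ξ,∞,m}`. -/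
def GammaInf (ξ : Ordinal.{0}) : Set (List Ordinal.{0}) :=
  ⋃ m : ℕ, levelInf ξ (m + 1)

/-- The unit-wise identification `ι` sending a member of `Γ_{ξ,n}` (or `Γ_{ξ,∞}`)
to the member of `Γ_ξ` obtained by unshifting its last unit: the last block of
entries lying in the same `ω^ξ`-range as the final entry, unshifted. -/
def iota (ξ : Ordinal.{0}) (t : List Ordinal.{0}) : List Ordinal.{0} :=
  match t.getLast? with
  | none => []
  | some o =>
    ((t.reverse.takeWhile fun a => decide (a / omega0 ^ ξ = o / omega0 ^ ξ)).reverse).map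
      fun a => a - omega0 ^ ξ * (o / omega0 ^ ξ)

/-- The weights `ℙ_ξ : Γ_ξ → [0,1]`: `ℙ_0 ≡ 1`; `ℙ_{ξ+1}(t) = (1/n) ℙ_ξ(ι_{ξ,n}(t))`
for `t ∈ Γ_{ξ,n}` (here `n` is recovered from the first entry of `t`); at limit `ξ`,
`ℙ_ξ(t) = ℙ_{ζ+1}(t − ω^ζ)` where `t ∈ ω^ζ + Γ_{ζ+1}`, `ζ = log_ω(first entry)`. -/
def Pweight (ξ : Ordinal.{0}) : List Ordinal.{0} → ℝ :=
  Ordinal.limitRecOn (motive := fun _ => List Ordinal.{0} → ℝ) ξ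
    (fun _ => 1)
    (fun ζ Pz t =>
      (((t.headI / omega0 ^ ζ).card.toNat : ℝ) + 1)⁻¹ * Pz (iota ζ t))
    (fun ξ' _ f t =>
      if h : Order.succ (Ordinal.log omega0 t.headI) < ξ' then
        f (Order.succ (Ordinal.log omega0 t.headI)) h
          (t.map fun a => a - omega0 ^ Ordinal.log omega0 t.headI)
      else 0)

section OmegaTrees

variable {X Y : Type u} [NormedAddCommGroup X] [NormedSpace ℝ X]
  [NormedAddCommGroup Y] [NormedSpace ℝ Y]

/-- `D` is a weak neighborhood basis at `0` in `X`, directed by reverse inclusion. -/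
def IsWeakNhdBasis (D : Set (Set X)) : Prop :=
  (∀ U ∈ D, U ∈ weakNhds (0 : X)) ∧ (∀ V ∈ weakNhds (0 : X), ∃ U ∈ D, U ⊆ V) ∧
    ∀ U ∈ D, ∀ V ∈ D, ∃ W ∈ D, W ⊆ U ∩ V

/-- `G·D`: the tree of sequences of pairs whose ordinal coordinates form a member
of `G` and whose second coordinates belong to `D`.  For `G = Γ_ξ` this is `Ω_ξ`,
for `G = Γ_{ξ,n}` it is `Ω_{ξ,n}`, etc. -/
def OmegaOf (D : Set (Set X)) (G : Set (List Ordinal.{0})) :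
    Set (List (Ordinal.{0} × Set X)) :=
  {w | w.map Prod.fst ∈ G ∧ ∀ p ∈ w, p.2 ∈ D}

/-- A collection `(x_t)_{t ∈ Ω}` is normally weakly null: `x_t ∈ U` whenever
`t = t₁ ⌢ (ζ, U)`. -/
def NormallyWNull (Ω : Set (List (Ordinal.{0} × Set X)))
    (g : List (Ordinal.{0} × Set X) → X) : Prop :=
  ∀ w ∈ Ω, ∀ (w₁ : List (Ordinal.{0} × Set X)) (ζ : Ordinal.{0}) (U : Set X),
    w = w₁ ++ [(ζ, U)] → g w ∈ U

/-- The weight `ℙ_ξ(ι_ξ(s))` of a node of an `Ω`-tree (the `D`-coordinates are ignored). -/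
def PweightIota (ξ : Ordinal.{0}) (s : List (Ordinal.{0} × Set X)) : ℝ :=
  Pweight ξ (iota ξ (s.map Prod.fst))

/-- The full special convex combination `Σ_{s ⪯ t, s ∈ Ω} ℙ_ξ(ι_ξ(s)) x_s` along the
branch through `t` (equal to `Σ_i z_i^t` for the special convex blocks `z_i^t`). -/
def branchComb (ξ : Ordinal.{0}) (Ω : Set (List (Ordinal.{0} × Set X)))
    (g : List (Ordinal.{0} × Set X) → X) (t : List (Ordinal.{0} × Set X)) : X :=
  ∑ s ∈ t.inits.toFinset.filter (fun s => s ∈ Ω), PweightIota ξ s • g s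

/-- The special convex block `z_m^t` of `(x_s)` lying on level `m`:
`z_m^t = Σ_{s ⪯ t, s ∈ Λ_{ξ,n,m}} ℙ_ξ(ι_{ξ,n}(s)) x_s`. -/
def levelBlock (ξ : Ordinal.{0}) (n m : ℕ)
    (g : List (Ordinal.{0} × Set X) → X) (t : List (Ordinal.{0} × Set X)) : X :=
  ∑ s ∈ t.inits.toFinset.filter (fun s => s.map Prod.fst ∈ levelN ξ n m),
    PweightIota ξ s • g s

/-- The convex block of `(x_s)` along the branch-segment `t ≺ s ⪯ t'` inside `Ω`. -/
def chainBlock (ξ : Ordinal.{0}) (Ω : Set (List (Ordinal.{0} × Set X)))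
    (g : List (Ordinal.{0} × Set X) → X) (t t' : List (Ordinal.{0} × Set X)) : X :=
  ∑ s ∈ t'.inits.toFinset.filter (fun s => s ∈ Ω ∧ t <+: s ∧ s ≠ t),
    PweightIota ξ s • g s

/-- The property defining `N_ξ(σ; A)` (relative to the weak neighborhood basis `D`):
there is a normally weakly null collection `(x_t)_{t ∈ Ω_{ξ,N+1}} ⊆ σ B_X` with
`‖Σ_{i=1}^{N+1} A z_i^t‖ > 1` for every maximal `t`.  `N_ξ(σ;A)` is the least `N`
with this property. -/
def NxiProp (ξ : Ordinal.{0}) (A : X →L[ℝ] Y) (D : Set (Set X)) (σ : ℝ) (N : ℕ) : Prop :=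
  ∃ g : List (Ordinal.{0} × Set X) → X,
    NormallyWNull (OmegaOf D (GammaN ξ (N + 1))) g ∧
    (∀ t ∈ OmegaOf D (GammaN ξ (N + 1)), ‖g t‖ ≤ σ) ∧
    ∀ t ∈ maxMembers (OmegaOf D (GammaN ξ (N + 1))),
      1 < ‖A (branchComb ξ (OmegaOf D (GammaN ξ (N + 1))) g t)‖

/-- `(u_n)` is `C`-dominated by the unit vector basis of `ℓ_p`. -/
def DominatedLp (u : ℕ → Y) (p C : ℝ) : Prop :=
  ∀ (m : ℕ) (a : ℕ → ℝ),
    ‖∑ n ∈ Finset.range m, a n • u n‖ ≤ C * (∑ n ∈ Finset.range m, |a n| ^ p) ^ (1 / p)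

/-- `(u_n)` is `C`-dominated by the unit vector basis of `c₀`. -/
def DominatedC0 (u : ℕ → Y) (C : ℝ) : Prop :=
  ∀ (m : ℕ) (a : ℕ → ℝ) (b : ℝ), (∀ n ∈ Finset.range m, |a n| ≤ b) →
    ‖∑ n ∈ Finset.range m, a n • u n‖ ≤ C * b

/-- `A` satisfies ξ-`ℓ_p` upper tree estimates: every normally weakly null collection
indexed by `Ω_{ξ,∞}` in `B_X` admits a chain `∅ = t_0 ≺ t_1 ≺ ⋯` through the levels
such that the images under `A` of the special convex blocks are dominated by the unit
vector basis of `ℓ_p`. -/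
def UpperTreeEst (ξ : Ordinal.{0}) (A : X →L[ℝ] Y) (p : ℝ) : Prop :=
  ∀ D : Set (Set X), IsWeakNhdBasis D →
    ∀ g : List (Ordinal.{0} × Set X) → X,
      NormallyWNull (OmegaOf D (GammaInf ξ)) g →
      (∀ t ∈ OmegaOf D (GammaInf ξ), ‖g t‖ ≤ 1) →
      ∃ ts : ℕ → List (Ordinal.{0} × Set X), ts 0 = [] ∧
        (∀ n : ℕ, ts n <+: ts (n + 1) ∧ ts n ≠ ts (n + 1)) ∧
        (∀ n : ℕ, ts (n + 1) ∈ maxMembers (OmegaOf D (levelInf ξ (n + 1)))) ∧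
        ∃ C : ℝ, DominatedLp
          (fun n => A (chainBlock ξ (OmegaOf D (GammaInf ξ)) g (ts n) (ts (n + 1)))) p C

end OmegaTrees

/-! ### ε-largeness of functions on `Γ_ξ` -/

/-- A function `f : Γ_ξ → ℝ` is ε-large: for every `δ > 0` there is a monotone
`θ : Γ_ξ → Γ_ξ` with `f(θ(t)) ≥ ε − δ` for all `t ∈ Γ_ξ`. -/
def IsLarge (ξ : Ordinal.{0}) (f : List Ordinal.{0} → ℝ) (ε : ℝ) : Prop :=
  ∀ δ : ℝ, 0 < δ → ∃ θ : List Ordinal.{0} → List Ordinal.{0},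
    Set.MapsTo θ (Gamma ξ) (Gamma ξ) ∧
    (∀ s t : List Ordinal.{0}, s ∈ Gamma ξ → t ∈ Gamma ξ → s <+: t → s ≠ t →
      θ s <+: θ t ∧ θ s ≠ θ t) ∧
    ∀ t ∈ Gamma ξ, ε - δ ≤ f (θ t)

/-!
For a vector `y` and a weakly null collection `(x_t)_{t ∈ B}`, let
`m(y) = inf {‖y + Ax‖ : t ∈ B, x ∈ co(x_s : s ⪯ t)}` (`branchInf A y B g`). Then `ρ_ξ(σ; A)`
bounds `m(y) - 1` for `‖y‖ ≤ 1`, while a constant for `t_{ξ,p}(A)` bounds `m(y)^p - ‖y‖^p`.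
Since `m` is positively homogeneous in `(y, (x_t))`, a bound `ρ_ξ(σ; A) ≤ C σ^p` applied to
`y / ‖y‖` and `(x_t / ‖y‖)` gives `m(y) ≤ ‖y‖ (1 + C (σ / ‖y‖)^p)` when `σ < ‖y‖`, and
convexity of `v ↦ (1 + v)^p` on `[0, C]` turns this into
`m(y)^p ≤ ‖y‖^p + ((1 + C)^p - 1) σ^p`; when `‖y‖ ≤ σ`, simply `m(y) ≤ (1 + ‖A‖) σ`.
Conversely, `m - 1 ≤ m^p - 1` for `m ≥ 1`, so a constant `C` for `t_{ξ,p}(A)` gives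
`ρ_ξ(σ; A) ≤ C σ^p`.
-/

lemma one_add_mul_rpow_le {p C s : ℝ} (hp : 1 ≤ p) (hC : 0 ≤ C) (hs₀ : 0 ≤ s) (hs₁ : s ≤ 1) :
    (1 + s * C) ^ p ≤ 1 + s * ((1 + C) ^ p - 1) := by
  have h := (convexOn_rpow hp).2 (mem_Ici.2 zero_le_one) (mem_Ici.2 (by linarith : (0 : ℝ) ≤ 1 + C))
    (sub_nonneg.2 hs₁) hs₀ (sub_add_cancel 1 s)
  simp only [_root_.smul_eq_mul, Real.one_rpow, mul_one] at h
  have harg : 1 - s + s * (1 + C) = 1 + s * C := by ring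
  rw [harg] at h
  linarith

lemma hasOrder.nonempty {Λ : Type v} {B : Set (List Λ)} {o : Ordinal.{0}} (h : hasOrder B o)
    (ho : 0 < o) : B.Nonempty := by
  have h0 := h.2 0 ho
  rwa [treeIter, Ordinal.limitRecOn_zero, ← nonempty_iff_ne_empty] at h0

section BranchInf

variable {X Y : Type*} [NormedAddCommGroup X] [NormedSpace ℝ X]
  [NormedAddCommGroup Y] [NormedSpace ℝ Y] {Λ : Type*} {B : Set (List Λ)} {g : List Λ → X}

lemma zero_mem_weakClosure_smul {S : Set X} (h : (0 : X) ∈ weakClosure S) (c : ℝ) :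
    (0 : X) ∈ weakClosure (c • S) := by
  rw [weakClosure, mem_preimage] at h ⊢
  have h0 := image_closure_subset_closure_image
    (continuous_const_smul c : Continuous fun x : WeakSpace ℝ X => c • x) (mem_image_of_mem _ h)
  rw [map_zero, smul_zero, image_image] at h0
  rw [map_zero, ← image_smul, image_image]
  simpa only [map_smul] using h0

lemma WeaklyNullColl.const_smul (h : WeaklyNullColl B g) (c : ℝ) :
    WeaklyNullColl B (fun s => c • g s) := by
  intro ζ t ht
  convert zero_mem_weakClosure_smul (h ζ t ht) c using 2
  ext x
  simp only [mem_ofPred_eq, mem_smul_set]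
  constructor
  · rintro ⟨s, hs, hs₀, hst, rfl⟩
    exact ⟨g s, ⟨s, hs, hs₀, hst, rfl⟩, rfl⟩
  · rintro ⟨_, ⟨s, hs, hs₀, hst, rfl⟩, rfl⟩
    exact ⟨s, hs, hs₀, hst, rfl⟩

def branchPoints (B : Set (List Λ)) (g : List Λ → X) : Set X :=
  ⋃ t ∈ B, branchHull B g t

lemma setOf_mem_branchHull_eq_image (φ : X → ℝ) :
    {c : ℝ | ∃ t ∈ B, ∃ x ∈ branchHull B g t, c = φ x} = φ '' branchPoints B g := by
  ext c
  constructor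
  · rintro ⟨t, ht, x, hx, rfl⟩
    exact ⟨x, mem_iUnion₂.2 ⟨t, ht, hx⟩, rfl⟩
  · rintro ⟨x, hx, rfl⟩
    obtain ⟨t, ht, hx⟩ := mem_iUnion₂.1 hx
    exact ⟨t, ht, x, hx, rfl⟩

lemma branchPoints_nonempty (hB : B.Nonempty) : (branchPoints B g).Nonempty := by
  obtain ⟨t, ht⟩ := hB
  exact ⟨g t, mem_biUnion ht (subset_convexHull ℝ _ ⟨t, ht, List.prefix_refl t, rfl⟩)⟩

lemma norm_le_of_mem_branchPoints {σ : ℝ} (hg : ∀ t ∈ B, ‖g t‖ ≤ σ) {x : X}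
    (hx : x ∈ branchPoints B g) : ‖x‖ ≤ σ := by
  obtain ⟨t, -, hx⟩ := mem_iUnion₂.mp hx
  have hball : branchHull B g t ⊆ closedBall 0 σ :=
    convexHull_min (by rintro _ ⟨s, hs, -, rfl⟩; simpa using hg s hs) (convex_closedBall 0 σ)
  simpa using hball hx

lemma branchPoints_const_smul (c : ℝ) :
    branchPoints B (fun s => c • g s) = c • branchPoints B g := by
  have hull (t : List Λ) : branchHull B (fun s => c • g s) t = c • branchHull B g t := by
    rw [branchHull, branchHull, ← convexHull_smul]
    congr 1
    ext x
    simp only [mem_ofPred_eq, mem_smul_set]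
    constructor
    · rintro ⟨s, hs, hst, rfl⟩
      exact ⟨g s, ⟨s, hs, hst, rfl⟩, rfl⟩
    · rintro ⟨_, ⟨s, hs, hst, rfl⟩, rfl⟩
      exact ⟨s, hs, hst, rfl⟩
  simp only [branchPoints, hull, smul_set_iUnion₂]

variable (A : X →L[ℝ] Y)

def branchInf (y : Y) (B : Set (List Λ)) (g : List Λ → X) : ℝ :=
  sInf ((fun x => ‖y + A x‖) '' branchPoints B g)

lemma bddBelow_image_norm_add (y : Y) (S : Set X) : BddBelow ((fun x => ‖y + A x‖) '' S) :=
  ⟨0, by rintro _ ⟨_, -, rfl⟩; exact norm_nonneg _⟩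

lemma branchInf_nonneg (y : Y) : 0 ≤ branchInf A y B g :=
  Real.sInf_nonneg (by rintro _ ⟨_, -, rfl⟩; exact norm_nonneg _)

lemma branchInf_le_norm_add (y : Y) (hB : B.Nonempty) {σ : ℝ} (hg : ∀ t ∈ B, ‖g t‖ ≤ σ) :
    branchInf A y B g ≤ ‖y‖ + ‖A‖ * σ := by
  obtain ⟨x, hx⟩ := branchPoints_nonempty (g := g) hB
  calc branchInf A y B g ≤ ‖y + A x‖ := csInf_le (bddBelow_image_norm_add A y _) ⟨x, hx, rfl⟩
    _ ≤ ‖y‖ + ‖A‖ * ‖x‖ := (norm_add_le _ _).trans (by gcongr; exact A.le_opNorm x)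
    _ ≤ ‖y‖ + ‖A‖ * σ := by gcongr; exact norm_le_of_mem_branchPoints hg hx

lemma branchInf_const_smul {c : ℝ} (hc : 0 ≤ c) (y : Y) :
    branchInf A (c • y) B (fun s => c • g s) = c * branchInf A y B g := by
  rw [branchInf, branchInf, branchPoints_const_smul, ← _root_.smul_eq_mul,
    ← Real.sInf_smul_of_nonneg hc,
    ← image_smul, ← image_smul, image_image, image_image]
  simp only [map_smul, ← smul_add, norm_smul, Real.norm_of_nonneg hc, _root_.smul_eq_mul]

lemma sInf_setOf_mem_branchHull {f : ℝ → ℝ} (hf : Continuous f) (hmono : MonotoneOn f (Ici 0))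
    (y : Y) (hB : B.Nonempty) :
    sInf {c : ℝ | ∃ t ∈ B, ∃ x ∈ branchHull B g t, c = f ‖y + A x‖} = f (branchInf A y B g) := by
  rw [setOf_mem_branchHull_eq_image (fun x => f ‖y + A x‖), ← image_image f, branchInf]
  refine (MonotoneOn.map_csInf_of_continuousWithinAt hf.continuousWithinAt
    (hmono.mono ?_) ((branchPoints_nonempty hB).image _) (bddBelow_image_norm_add A y _)).symm
  rintro _ ⟨x, -, rfl⟩
  exact norm_nonneg _

lemma sInf_setOf_norm_add_sub_one (y : Y) (hB : B.Nonempty) :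
    sInf {c : ℝ | ∃ t ∈ B, ∃ x ∈ branchHull B g t, c = ‖y + A x‖ - 1} = branchInf A y B g - 1 :=
  sInf_setOf_mem_branchHull A (f := (· - 1)) (by fun_prop)
    (fun _ _ _ _ h => sub_le_sub_right h 1) y hB

lemma sInf_setOf_norm_add_rpow {p : ℝ} (hp : 0 ≤ p) (y : Y) (hB : B.Nonempty) :
    sInf {c : ℝ | ∃ t ∈ B, ∃ x ∈ branchHull B g t, c = ‖y + A x‖ ^ p} = branchInf A y B g ^ p :=
  sInf_setOf_mem_branchHull A (Real.continuous_rpow_const hp)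
    (Real.monotoneOn_rpow_Ici_of_exponent_nonneg hp) y hB

lemma branchInf_rpow_le_of_norm_le {y : Y} {σ p : ℝ} (hp : 0 ≤ p) (hyσ : ‖y‖ ≤ σ)
    (hB : B.Nonempty) (hg : ∀ t ∈ B, ‖g t‖ ≤ σ) :
    branchInf A y B g ^ p ≤ (1 + ‖A‖) ^ p * σ ^ p := by
  rw [← Real.mul_rpow (by positivity) ((norm_nonneg y).trans hyσ)]
  refine Real.rpow_le_rpow (branchInf_nonneg A y) ?_ hp
  linarith [branchInf_le_norm_add A y hB hg]

end BranchInf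

section Moduli

variable {X Y : Type u} [NormedAddCommGroup X] [NormedSpace ℝ X]
  [NormedAddCommGroup Y] [NormedSpace ℝ Y] {ξ : Ordinal.{0}} {A : X →L[ℝ] Y}
  {Λ : Type (max u 1)} {B : Set (List Λ)} {g : List Λ → X}

lemma branchInf_sub_one_le_rho {y : Y} (hy : ‖y‖ ≤ 1) {σ : ℝ} (hB : IsBTree B)
    (ho : hasOrder B (omega0 ^ ξ)) (hwn : WeaklyNullColl B g) (hg : ∀ t ∈ B, ‖g t‖ ≤ σ) :
    branchInf A y B g - 1 ≤ rho ξ A σ := by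
  have hB₀ := ho.nonempty (opow_pos ξ omega0_pos)
  rw [← sInf_setOf_norm_add_sub_one A y hB₀]
  refine le_csSup ⟨‖A‖ * σ, ?_⟩ ⟨y, hy, Λ, B, g, hB, ho, hwn, hg, rfl⟩
  rintro r ⟨y', hy', Λ', B', g', -, ho', -, hg', rfl⟩
  have hB₀' := ho'.nonempty (opow_pos ξ omega0_pos)
  rw [sInf_setOf_norm_add_sub_one A y' hB₀']
  linarith [branchInf_le_norm_add A y' hB₀' hg']

lemma rho_le {σ b : ℝ} (hb : 0 ≤ b)
    (h : ∀ y : Y, ‖y‖ ≤ 1 → ∀ (Λ : Type (max u 1)) (B : Set (List Λ)) (g : List Λ → X),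
      IsBTree B → hasOrder B (omega0 ^ ξ) → WeaklyNullColl B g → (∀ t ∈ B, ‖g t‖ ≤ σ) →
      branchInf A y B g - 1 ≤ b) :
    rho ξ A σ ≤ b := by
  refine Real.sSup_le ?_ hb
  rintro r ⟨y, hy, Λ, B, g, hB, ho, hwn, hg, rfl⟩
  rw [sInf_setOf_norm_add_sub_one A y (ho.nonempty (opow_pos ξ omega0_pos))]
  exact h y hy Λ B g hB ho hwn hg

lemma mem_tConstSet_iff {p C : ℝ} (hp : 0 ≤ p) :
    C ∈ tConstSet ξ A p ↔ 0 < C ∧ ∀ (y : Y) (σ : ℝ), 0 < σ →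
      ∀ (Λ : Type (max u 1)) (B : Set (List Λ)) (g : List Λ → X),
        IsBTree B → hasOrder B (omega0 ^ ξ) → WeaklyNullColl B g → (∀ t ∈ B, ‖g t‖ ≤ σ) →
        branchInf A y B g ^ p ≤ ‖y‖ ^ p + C * σ ^ p := by
  refine and_congr_right fun _ => forall₄_congr fun y σ _ Λ => forall₄_congr fun B g _ ho => ?_
  rw [sInf_setOf_norm_add_rpow A hp y (ho.nonempty (opow_pos ξ omega0_pos))]

lemma branchInf_le_of_rho_le {y : Y} {σ b : ℝ} (hy : 0 < ‖y‖) (hB : IsBTree B)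
    (ho : hasOrder B (omega0 ^ ξ)) (hwn : WeaklyNullColl B g) (hg : ∀ t ∈ B, ‖g t‖ ≤ σ)
    (hrho : rho ξ A (σ / ‖y‖) ≤ b) :
    branchInf A y B g ≤ ‖y‖ * (1 + b) := by
  have hunit : ‖‖y‖⁻¹ • y‖ ≤ 1 := by rw [norm_smul, norm_inv, norm_norm, inv_mul_cancel₀ hy.ne']
  have hg' : ∀ t ∈ B, ‖‖y‖⁻¹ • g t‖ ≤ σ / ‖y‖ := fun t ht => by
    rw [norm_smul, norm_inv, norm_norm, inv_mul_eq_div]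
    exact div_le_div_of_nonneg_right (hg t ht) hy.le
  have h := (branchInf_sub_one_le_rho hunit hB ho (hwn.const_smul _) hg').trans hrho
  rw [branchInf_const_smul A (inv_nonneg.2 hy.le)] at h
  rw [← inv_mul_le_iff₀ hy]
  linarith

lemma branchInf_rpow_le_of_lt_norm {y : Y} {σ p C : ℝ} (hp : 1 ≤ p) (hC : 0 ≤ C) (hσ : 0 < σ)
    (hyσ : σ < ‖y‖) (hB : IsBTree B) (ho : hasOrder B (omega0 ^ ξ)) (hwn : WeaklyNullColl B g)
    (hg : ∀ t ∈ B, ‖g t‖ ≤ σ) (hrho : ∀ τ, 0 < τ → τ < 1 → rho ξ A τ ≤ C * τ ^ p) :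
    branchInf A y B g ^ p ≤ ‖y‖ ^ p + ((1 + C) ^ p - 1) * σ ^ p := by
  have hy : 0 < ‖y‖ := hσ.trans hyσ
  set s := (σ / ‖y‖) ^ p
  have hs₀ : 0 ≤ s := by positivity
  have hs₁ : s ≤ 1 := Real.rpow_le_one (by positivity) ((div_lt_one hy).2 hyσ).le (by linarith)
  have hσs : ‖y‖ ^ p * s = σ ^ p := by
    rw [← Real.mul_rpow hy.le (by positivity), mul_div_cancel₀ _ hy.ne']
  have hm := branchInf_le_of_rho_le hy hB ho hwn hg
    (hrho _ (by positivity) ((div_lt_one hy).2 hyσ))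
  calc branchInf A y B g ^ p ≤ (‖y‖ * (1 + s * C)) ^ p :=
        Real.rpow_le_rpow (branchInf_nonneg A y) (by rwa [mul_comm s]) (by linarith)
    _ = ‖y‖ ^ p * (1 + s * C) ^ p := Real.mul_rpow hy.le (by positivity)
    _ ≤ ‖y‖ ^ p * (1 + s * ((1 + C) ^ p - 1)) := by
        gcongr; exact one_add_mul_rpow_le hp hC hs₀ hs₁
    _ = ‖y‖ ^ p + ((1 + C) ^ p - 1) * σ ^ p := by rw [← hσs]; ring

lemma mem_tConstSet_of_rho_le {p C : ℝ} (hp : 1 ≤ p) (hC : 0 ≤ C)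
    (hrho : ∀ σ, 0 < σ → σ < 1 → rho ξ A σ ≤ C * σ ^ p) :
    max ((1 + ‖A‖) ^ p) ((1 + C) ^ p - 1) ∈ tConstSet ξ A p := by
  refine (mem_tConstSet_iff (by linarith)).2
    ⟨lt_max_of_lt_left (Real.rpow_pos_of_pos (by positivity) p), ?_⟩
  intro y σ hσ Λ B g hB ho hwn hg
  have hσp : 0 ≤ σ ^ p := by positivity
  rcases le_or_gt ‖y‖ σ with hyσ | hyσ
  · nlinarith [branchInf_rpow_le_of_norm_le A (by linarith : (0 : ℝ) ≤ p) hyσ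
        (ho.nonempty (opow_pos ξ omega0_pos)) hg,
      le_max_left ((1 + ‖A‖) ^ p) ((1 + C) ^ p - 1), Real.rpow_nonneg (norm_nonneg y) p]
  · nlinarith [branchInf_rpow_le_of_lt_norm hp hC hσ hyσ hB ho hwn hg hrho,
      le_max_right ((1 + ‖A‖) ^ p) ((1 + C) ^ p - 1)]

lemma rho_le_of_mem_tConstSet {p C σ : ℝ} (hp : 1 ≤ p) (hC : C ∈ tConstSet ξ A p) (hσ : 0 < σ) :
    rho ξ A σ ≤ C * σ ^ p := by
  obtain ⟨hC₀, ht⟩ := (mem_tConstSet_iff (by linarith)).1 hC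
  refine rho_le (by positivity) fun y hy Λ B g hB ho hwn hg => ?_
  have hm := ht y σ hσ Λ B g hB ho hwn hg
  have hyp : ‖y‖ ^ p ≤ 1 := Real.rpow_le_one (norm_nonneg y) hy (by linarith)
  rcases le_or_gt (branchInf A y B g) 1 with hm₁ | hm₁
  · have : 0 ≤ C * σ ^ p := by positivity
    linarith
  · linarith [Real.self_le_rpow_of_one_le hm₁.le hp]

lemma sSup_rho_div_rpow_le_sInf_tConstSet {p : ℝ} (hp : 1 ≤ p)
    (hne : (tConstSet ξ A p).Nonempty) :
    sSup {r : ℝ | ∃ σ : ℝ, 0 < σ ∧ σ < 1 ∧ r = rho ξ A σ / σ ^ p} ≤ sInf (tConstSet ξ A p) := by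
  have hInf : 0 ≤ sInf (tConstSet ξ A p) := Real.sInf_nonneg fun C hC => hC.1.le
  refine Real.sSup_le ?_ hInf
  rintro _ ⟨σ, hσ, -, rfl⟩
  refine le_csInf hne fun C hC => ?_
  rw [div_le_iff₀ (by positivity)]
  exact rho_le_of_mem_tConstSet hp hC hσ

lemma sInf_tConstSet_le {p : ℝ} (hp : 1 ≤ p) (hne : (tConstSet ξ A p).Nonempty) :
    sInf (tConstSet ξ A p) ≤ max ((1 + ‖A‖) ^ p)
      ((1 + max (sSup {r : ℝ | ∃ σ : ℝ, 0 < σ ∧ σ < 1 ∧ r = rho ξ A σ / σ ^ p}) 0) ^ p - 1) := by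
  obtain ⟨C₀, hC₀⟩ := hne
  set S := {r : ℝ | ∃ σ : ℝ, 0 < σ ∧ σ < 1 ∧ r = rho ξ A σ / σ ^ p}
  have hbdd : BddAbove S := ⟨C₀, by
    rintro _ ⟨σ, hσ, -, rfl⟩
    rw [div_le_iff₀ (by positivity)]
    exact rho_le_of_mem_tConstSet hp hC₀ hσ⟩
  refine csInf_le ⟨0, fun C hC => hC.1.le⟩ (mem_tConstSet_of_rho_le hp (le_max_right _ _) ?_)
  intro σ hσ hσ₁
  calc rho ξ A σ ≤ sSup S * σ ^ p :=
        (div_le_iff₀ (by positivity)).1 (le_csSup hbdd ⟨σ, hσ, hσ₁, rfl⟩)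
    _ ≤ max (sSup S) 0 * σ ^ p := by gcongr; exact le_max_left _ _

end Moduli

theorem statement6_general {X Y : Type u}
    [NormedAddCommGroup X] [NormedSpace ℝ X]
    [NormedAddCommGroup Y] [NormedSpace ℝ Y]
    (ξ : Ordinal.{0}) (A : X →L[ℝ] Y) (p : ℝ) (hp : 1 < p) :
    ((∃ C : ℝ, ∀ σ : ℝ, 0 < σ → σ ≤ 1 → rho ξ A σ ≤ C * σ ^ p) ↔
      (tConstSet ξ A p).Nonempty) ∧
    ∃ F G : ℝ → ℝ → ℝ → ℝ, ∀ B : X →L[ℝ] Y, (tConstSet ξ B p).Nonempty →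
      sInf (tConstSet ξ B p) ≤
        F (sSup {r : ℝ | ∃ σ : ℝ, 0 < σ ∧ σ < 1 ∧ r = rho ξ B σ / σ ^ p}) p ‖B‖ ∧
      sSup {r : ℝ | ∃ σ : ℝ, 0 < σ ∧ σ < 1 ∧ r = rho ξ B σ / σ ^ p} ≤
        G (sInf (tConstSet ξ B p)) p ‖B‖ := by
  refine ⟨⟨?_, ?_⟩, ?_⟩
  · rintro ⟨C, hC⟩
    refine ⟨_, mem_tConstSet_of_rho_le hp.le (le_max_right C 0) fun σ hσ hσ₁ => ?_⟩
    exact (hC σ hσ hσ₁.le).trans (by gcongr; exact le_max_left C 0)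
  · rintro ⟨C, hC⟩
    exact ⟨C, fun σ hσ _ => rho_le_of_mem_tConstSet hp.le hC hσ⟩
  · exact ⟨fun s q a => max ((1 + a) ^ q) ((1 + max s 0) ^ q - 1), fun t _ _ => t,
      fun B hB => ⟨sInf_tConstSet_le hp.le hB, sSup_rho_div_rpow_le_sInf_tConstSet hp.le hB⟩⟩

/-- Let `ξ` be an ordinal, `A : X → Y` an operator between Banach
spaces, and `1 < p < ∞`.  Then `A` is ξ-asymptotically uniformly smooth with power type
`p` iff `t_{ξ,p}(A) < ∞` (i.e. some constant `C > 0` works).  Moreover, in this case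
each of `t_{ξ,p}(A)` and `sup_{σ∈(0,1)} ρ_ξ(σ;A)/σ^p` can be majorized by a quantity
depending only on the other, `p`, and `‖A‖`. -/
theorem statement6 {X Y : Type u}
    [NormedAddCommGroup X] [NormedSpace ℝ X] [CompleteSpace X]
    [NormedAddCommGroup Y] [NormedSpace ℝ Y] [CompleteSpace Y]
    (ξ : Ordinal.{0}) (A : X →L[ℝ] Y) (p : ℝ) (hp : 1 < p) :
    ((∃ C : ℝ, ∀ σ : ℝ, 0 < σ → σ ≤ 1 → rho ξ A σ ≤ C * σ ^ p) ↔
      (tConstSet ξ A p).Nonempty) ∧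
    ∃ F G : ℝ → ℝ → ℝ → ℝ, ∀ B : X →L[ℝ] Y, (tConstSet ξ B p).Nonempty →
      sInf (tConstSet ξ B p) ≤
        F (sSup {r : ℝ | ∃ σ : ℝ, 0 < σ ∧ σ < 1 ∧ r = rho ξ B σ / σ ^ p}) p ‖B‖ ∧
      sSup {r : ℝ | ∃ σ : ℝ, 0 < σ ∧ σ < 1 ∧ r = rho ξ B σ / σ ^ p} ≤
        G (sInf (tConstSet ξ B p)) p ‖B‖ :=
  statement6_general ξ A p hp

end SzlenkPaper
end
end

section
/- Let X be a Banach space, K ⊆ X* a nonempty weak*-compact set, and σ, ε, a > 0 with a/σ > ε. Let (x_λ)_{λ∈D} ⊆ σB_X be a weakly null net and (x*_λ)_{λ∈D} ⊆ K a net such that Re x*_λ(x_λ) ≥ a for every λ. Then every weak*-cluster point of (x*_λ)_{λ∈D} lies in s_ε(K). -/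
/-!
Common definitions formalizing the notions of Causey, "Power type ξ-asymptotically
uniformly smooth norms": Szlenk derivations and indices, B-trees, weakly null and
weak*-null collections, the moduli ρ_ξ and δ_ξ^{w*}, the trees Γ_ξ, Γ_{ξ,n}, Γ_{ξ,∞}
with their levels and probability weights, and related quantities.
-/

noncomputable section

open Ordinal Set Metric Filter NormedSpace Pointwise
open scoped Classical ENNReal Topology

universe u v

namespace SzlenkPaper

/-!
Against a weakly null net, `f(x_λ) → 0` while `x*_λ(x_λ) ≥ a`, so eventually
`(x*_λ - f)(x_λ) > εσ` and hence `‖x*_λ - f‖ > ε`. A cluster point `f` has such `x*_λ` in each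
of its weak*-neighbourhoods; it lies in `K` because `K` is weak*-closed, and `K` is
norm-bounded by the uniform boundedness principle, so these distances bound `diam (V ∩ K)`.
-/

section WeakStar

variable {X : Type u} [NormedAddCommGroup X] [NormedSpace ℝ X]

theorem tendsto_apply_of_tendsto_weakNhds {ι : Type*} {l : Filter ι} {x : ι → X} {x₀ : X}
    (h : Tendsto x l (weakNhds x₀)) (f : StrongDual ℝ X) :
    Tendsto (fun i => f (x i)) l (𝓝 (f x₀)) := by
  rw [weakNhds, tendsto_comap_iff] at h
  exact ((WeakBilin.eval_continuous (topDualPairing ℝ X).flip f).tendsto _).comp h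

theorem mem_of_mem_wstarNhds {f : StrongDual ℝ X} {V : Set (StrongDual ℝ X)}
    (hV : V ∈ wstarNhds f) : f ∈ V := by
  obtain ⟨U, hU, hUV⟩ := mem_comap.mp hV
  exact hUV (mem_of_mem_nhds (X := WeakDual ℝ X) hU)

theorem IsWStarCompact.isBounded [CompleteSpace X] {K : Set (StrongDual ℝ X)}
    (hK : IsWStarCompact K) : Bornology.IsBounded K := by
  have hbdd := WeakDual.isBounded_iff_isVonNBounded.mpr (hK.isVonNBounded (𝕜 := ℝ))
  rwa [← WeakDual.isBounded_toWeakDual_preimage_iff_isBounded,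
    StrongDual.toWeakDual.injective.preimage_image] at hbdd

theorem IsWStarCompact.mem_of_forall_wstarNhds_inter_nonempty {K : Set (StrongDual ℝ X)}
    (hK : IsWStarCompact K) {f : StrongDual ℝ X}
    (h : ∀ V ∈ wstarNhds f, (V ∩ K).Nonempty) : f ∈ K := by
  have hcl : StrongDual.toWeakDual f ∈ closure (StrongDual.toWeakDual '' K) :=
    mem_closure_iff_nhds.mpr fun U hU => by
      obtain ⟨g, hgU, hgK⟩ := h _ (preimage_mem_comap hU)
      exact ⟨_, hgU, g, hgK, rfl⟩
  rw [hK.isClosed.closure_eq] at hcl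
  exact StrongDual.toWeakDual.injective.mem_set_image.mp hcl

theorem lt_norm_sub_of_mul_lt_apply_sub {g f : StrongDual ℝ X} {v : X} {σ ε : ℝ}
    (hσ : 0 < σ) (hv : ‖v‖ ≤ σ) (h : ε * σ < g v - f v) : ε < ‖g - f‖ := by
  refine lt_of_mul_lt_mul_right ?_ hσ.le
  calc ε * σ < (g - f) v := h
    _ ≤ ‖(g - f) v‖ := le_abs_self _
    _ ≤ ‖g - f‖ * ‖v‖ := (g - f).le_opNorm v
    _ ≤ ‖g - f‖ * σ := by gcongr

end WeakStar

theorem statement9_general {X : Type u}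
    [NormedAddCommGroup X] [NormedSpace ℝ X] [CompleteSpace X]
    (K : Set (StrongDual ℝ X)) (hK : IsWStarCompact K)
    (σ ε a : ℝ) (hσ : 0 < σ) (hε : 0 < ε) (haσ : ε < a / σ)
    (D : Type v) [Preorder D]
    (x : D → X) (hx : ∀ d, ‖x d‖ ≤ σ)
    (hwn : Filter.Tendsto x Filter.atTop (weakNhds (0 : X)))
    (xs : D → StrongDual ℝ X) (hxs : ∀ d, xs d ∈ K)
    (hlb : ∀ d, a ≤ xs d (x d)) :
    ∀ f : StrongDual ℝ X, (wstarNhds f ⊓ Filter.map xs Filter.atTop).NeBot →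
      f ∈ szDeriv ε K := by
  intro f hf
  have hfreq : ∀ V ∈ wstarNhds f, ∃ᶠ d in atTop, xs d ∈ V := fun V hV =>
    inf_neBot_iff_frequently_left.mp hf hV
  have hfK : f ∈ K := hK.mem_of_forall_wstarNhds_inter_nonempty fun V hV =>
    let ⟨d, hd⟩ := (hfreq V hV).exists
    ⟨xs d, hd, hxs d⟩
  have hεσ : ε * σ < a := (lt_div_iff₀ hσ).mp haσ
  have hsmall : ∀ᶠ d in atTop, f (x d) < a - ε * σ := by
    refine (tendsto_apply_of_tendsto_weakNhds hwn f).eventually (gt_mem_nhds ?_)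
    rw [map_zero]
    linarith
  rw [szDeriv, if_neg hε.not_ge]
  refine ⟨hfK, fun V hV => ?_⟩
  obtain ⟨d, hdV, hd⟩ := ((hfreq V hV).and_eventually hsmall).exists
  have hfar : ε < dist (xs d) f := by
    rw [dist_eq_norm]
    exact lt_norm_sub_of_mul_lt_apply_sub hσ (hx d) (by linarith [hlb d])
  exact hfar.trans_le <| dist_le_diam_of_mem (hK.isBounded.subset inter_subset_right)
    ⟨hdV, hxs d⟩ ⟨mem_of_mem_wstarNhds hV, hfK⟩

/-- Let `X` be a Banach space, `K ⊆ X*` a nonempty weak*-compact set,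
and `σ, ε, a > 0` with `a/σ > ε`.  Let `(x_λ)_{λ∈D} ⊆ σB_X` be a weakly null net and
`(x*_λ)_{λ∈D} ⊆ K` a net with `x*_λ(x_λ) ≥ a` for every `λ`.  Then every weak*-cluster
point of `(x*_λ)` lies in `s_ε(K)`. -/
theorem statement9 {X : Type u}
    [NormedAddCommGroup X] [NormedSpace ℝ X] [CompleteSpace X]
    (K : Set (StrongDual ℝ X)) (hK : IsWStarCompact K) (hKne : K.Nonempty)
    (σ ε a : ℝ) (hσ : 0 < σ) (hε : 0 < ε) (ha : 0 < a) (haσ : ε < a / σ)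
    (D : Type v) [Preorder D] [IsDirected D (· ≤ ·)] [Nonempty D]
    (x : D → X) (hx : ∀ d, ‖x d‖ ≤ σ)
    (hwn : Filter.Tendsto x Filter.atTop (weakNhds (0 : X)))
    (xs : D → StrongDual ℝ X) (hxs : ∀ d, xs d ∈ K)
    (hlb : ∀ d, a ≤ xs d (x d)) :
    ∀ f : StrongDual ℝ X, (wstarNhds f ⊓ Filter.map xs Filter.atTop).NeBot →
      f ∈ szDeriv ε K :=
  statement9_general K hK σ ε a hσ hε haσ D x hx hwn xs hxs hlb

end SzlenkPaper
end
end
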